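/- Theorem 3.8, anti-Yetter-Drinfeld condition (on representatives): Suppose the coextension is Hopf Galois with inverse g of the canonical map β, and κ₀ := (ε_C ⊗ id_H) ∘ g. For every c ∈ C^D and h ∈ H (note c ◁ h ∈ C^D, and the relevant arguments of κ₀ lie in C □_D C), one has Σ S(h⁽³⁾)·κ₀(c⁽³⁾ ⊗ c⁽¹⁾)·h⁽¹⁾ ⊗ (c⁽²⁾ ◁ h⁽²⁾) = Σ κ₀((c ◁ h)⁽³⁾ ⊗ (c ◁ h)⁽¹⁾) ⊗ (c ◁ h)⁽²⁾ in H ⊗ C. Hence C^D, with the right H-action ◁ and the left H-coaction c ↦ Σ κ₀(c⁽³⁾ ⊗ c⁽¹⁾) ⊗ c⁽²⁾, satisfies the right-left anti-Yetter-Drinfeld compatibility condition. -/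

import Mathlib

open TensorProduct

noncomputable section

variable (k : Type*) [Field k]
variable (H : Type*) [Ring H] [HopfAlgebra k H]
variable (C : Type*) [AddCommGroup C] [Module k C] [Coalgebra k C]

/-- The linearization `C ⊗ H → C` of a bilinear right action `r : C → H → C`. -/
def actL (r : C →ₗ[k] H →ₗ[k] C) : C ⊗[k] H →ₗ[k] C := TensorProduct.lift r

/-- The subspace `I = span_k {c ◁ h - ε_H(h)·c}` of `C`. -/
def coidealI (r : C →ₗ[k] H →ₗ[k] C) : Submodule k C :=
  Submodule.span k {x : C | ∃ (c : C) (h : H), x = r c h - Coalgebra.counit (R := k) h • c}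
variable (D : Type*) [AddCommGroup D] [Module k D] [Coalgebra k D]

/-- `x ↦ Σ x⁽¹⁾ ⊗ π(x⁽²⁾) ⊗ x⁽³⁾`-type map: apply `Δ_C` then `π` on the first tensor
factor of `C ⊗ C`; first leg of the cotensor-product equalizer. -/
def cotL1 (π : C →ₗc[k] D) : C ⊗[k] C →ₗ[k] (C ⊗[k] D) ⊗[k] C :=
  ((π.toLinearMap.lTensor C) ∘ₗ Coalgebra.comul (R := k)).rTensor C

/-- Second leg of the cotensor-product equalizer: apply `Δ_C` then `π` on the second
tensor factor of `C ⊗ C`. -/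
def cotL2 (π : C →ₗc[k] D) : C ⊗[k] C →ₗ[k] (C ⊗[k] D) ⊗[k] C :=
  (TensorProduct.assoc k C D C).symm.toLinearMap ∘ₗ
    ((π.toLinearMap.rTensor C) ∘ₗ Coalgebra.comul (R := k)).lTensor C

/-- The cotensor product `C □_D C`, as a subspace of `C ⊗ C`. -/
def cot (π : C →ₗc[k] D) : Submodule k (C ⊗[k] C) :=
  LinearMap.ker (cotL1 k C D π - cotL2 k C D π)

/-- The canonical map `β : C ⊗ H → C ⊗ C`, `c ⊗ h ↦ Σ c⁽¹⁾ ⊗ (c⁽²⁾ ◁ h)`. -/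
def βmap (r : C →ₗ[k] H →ₗ[k] C) : C ⊗[k] H →ₗ[k] C ⊗[k] C :=
  ((actL k H C r).lTensor C) ∘ₗ (TensorProduct.assoc k C C H).toLinearMap ∘ₗ
    ((Coalgebra.comul (R := k)).rTensor H)

/-- The map `κ₀ = (ε_C ⊗ id_H) ∘ g : C □_D C → H`. -/
def κmap (π : C →ₗc[k] D) (g : cot k C D π →ₗ[k] C ⊗[k] H) : cot k C D π →ₗ[k] H :=
  (TensorProduct.lid k H).toLinearMap ∘ₗ ((Coalgebra.counit (R := k) (A := C)).rTensor H) ∘ₗ g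

/-- Membership in `C^D`: `Σ c⁽¹⁾ ⊗ π(c⁽²⁾) = Σ c⁽²⁾ ⊗ π(c⁽¹⁾)` in `C ⊗ D`. -/
def memCD (π : C →ₗc[k] D) (c : C) : Prop :=
  (π.toLinearMap.lTensor C) (Coalgebra.comul (R := k) c) =
    (π.toLinearMap.lTensor C) ((TensorProduct.comm k C C) (Coalgebra.comul (R := k) c))

/-- Iterated comultiplication `c ↦ Σ c⁽¹⁾ ⊗ (c⁽²⁾ ⊗ c⁽³⁾)`. -/
def Δ3 : C →ₗ[k] C ⊗[k] (C ⊗[k] C) :=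
  ((Coalgebra.comul (R := k) (A := C)).lTensor C) ∘ₗ Coalgebra.comul (R := k)

/-- Cyclic rotation `a ⊗ (b ⊗ c) ↦ b ⊗ (c ⊗ a)`. -/
def rot3 : C ⊗[k] (C ⊗[k] C) →ₗ[k] C ⊗[k] (C ⊗[k] C) :=
  (TensorProduct.assoc k C C C).toLinearMap ∘ₗ
    (TensorProduct.comm k C (C ⊗[k] C)).toLinearMap

/-- The element `Σ c⁽²⁾ ⊗ (c⁽³⁾ ⊗ c⁽¹⁾)` of `C ⊗ (C ⊗ C)`. -/
def coactElem (c : C) : C ⊗[k] (C ⊗[k] C) := rot3 k C (Δ3 k C c)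

/-- Iterated comultiplication of `H`: `h ↦ Σ h⁽¹⁾ ⊗ (h⁽²⁾ ⊗ h⁽³⁾)`. -/
def Δ3H : H →ₗ[k] H ⊗[k] (H ⊗[k] H) :=
  ((Coalgebra.comul (R := k) (A := H)).lTensor H) ∘ₗ Coalgebra.comul (R := k)

/-- Triple multiplication `(a ⊗ b) ⊗ c ↦ a·b·c`. -/
def mul3 : (H ⊗[k] H) ⊗[k] H →ₗ[k] H :=
  (LinearMap.mul' k H) ∘ₗ ((LinearMap.mul' k H).rTensor H)

/-- The map sending `(h⁽¹⁾ ⊗ (h⁽²⁾ ⊗ h⁽³⁾)) ⊗ (c⁽²⁾ ⊗ y)`, with `y ∈ C □_D C`, to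
`S(h⁽³⁾)·κ₀(y)·h⁽¹⁾ ⊗ (c⁽²⁾ ◁ h⁽²⁾)`; the left-hand side of the AYD condition. -/
def aydLHS (r : C →ₗ[k] H →ₗ[k] C) (π : C →ₗc[k] D)
    (g : cot k C D π →ₗ[k] C ⊗[k] H) :
    (H ⊗[k] (H ⊗[k] H)) ⊗[k] (C ⊗[k] (cot k C D π)) →ₗ[k] H ⊗[k] C :=
  TensorProduct.map (mul3 k H) (actL k H C r) ∘ₗ
    ((TensorProduct.comm k H C).toLinearMap.lTensor ((H ⊗[k] H) ⊗[k] H)) ∘ₗ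
    (TensorProduct.assoc k (H ⊗[k] H) H (H ⊗[k] C)).symm.toLinearMap ∘ₗ
    ((TensorProduct.assoc k H H C).toLinearMap.lTensor (H ⊗[k] H)) ∘ₗ
    (TensorProduct.comm k ((H ⊗[k] H) ⊗[k] C) (H ⊗[k] H)).toLinearMap ∘ₗ
    (TensorProduct.tensorTensorTensorComm k (H ⊗[k] H) H C H).toLinearMap ∘ₗ
    ((TensorProduct.assoc k H H H).symm.toLinearMap.rTensor (C ⊗[k] H)) ∘ₗ
    TensorProduct.map (((HopfAlgebra.antipode (R := k) (A := H)).lTensor H).lTensor H)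
      ((κmap k H C D π g).lTensor C)


section AYDAux

variable {k : Type*} [Field k]
variable {H : Type*} [Ring H] [HopfAlgebra k H]
variable {C : Type*} [AddCommGroup C] [Module k C] [Coalgebra k C]
variable {D : Type*} [AddCommGroup D] [Module k D] [Coalgebra k D]

/-- generalized coassociativity helper, in any coalgebra -/
lemma ayd_HLa {A : Type*} [AddCommGroup A] [Module k A] [Coalgebra k A] (a : A)
    (r1 : Coalgebra.Repr k a (A × A)) (la : ∀ i, Coalgebra.Repr k (r1.left i) (A × A)) :
    ∑ i ∈ r1.index, ∑ l ∈ (la i).index,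
      (la i).left l ⊗ₜ[k] ((la i).right l ⊗ₜ[k] r1.right i)
      = ∑ i ∈ r1.index, r1.left i ⊗ₜ[k] Coalgebra.comul (R := k) (r1.right i) := by
  have hc := Coalgebra.coassoc_apply (R := k) a
  rw [← r1.eq] at hc
  simp only [map_sum, LinearMap.rTensor_tmul, LinearMap.lTensor_tmul] at hc
  calc ∑ i ∈ r1.index, ∑ l ∈ (la i).index,
      (la i).left l ⊗ₜ[k] ((la i).right l ⊗ₜ[k] r1.right i)
      = ∑ i ∈ r1.index, (TensorProduct.assoc k A A A)
          ((Coalgebra.comul (R := k) (r1.left i)) ⊗ₜ[k] r1.right i) := by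
        refine Finset.sum_congr rfl fun i _ => ?_
        rw [← (la i).eq, TensorProduct.sum_tmul, map_sum]
        simp [TensorProduct.assoc_tmul]
    _ = _ := hc

lemma ayd_sum_counit_smul {A : Type*} [AddCommGroup A] [Module k A] [Coalgebra k A] (a : A)
    (r1 : Coalgebra.Repr k a (A × A)) :
    ∑ i ∈ r1.index, Coalgebra.counit (R := k) (r1.left i) • r1.right i = a := by
  have := congrArg (TensorProduct.lid k A) (Coalgebra.sum_counit_tmul_eq (R := k) r1)
  rw [map_sum] at this
  simp only [TensorProduct.lid_tmul] at this
  simpa using this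

lemma ayd_sum_smul_counit {A : Type*} [AddCommGroup A] [Module k A] [Coalgebra k A] (a : A)
    (r1 : Coalgebra.Repr k a (A × A)) :
    ∑ i ∈ r1.index, Coalgebra.counit (R := k) (r1.right i) • r1.left i = a := by
  have := congrArg (TensorProduct.rid k A) (Coalgebra.sum_tmul_counit_eq (R := k) r1)
  rw [map_sum] at this
  simp only [TensorProduct.rid_tmul] at this
  simpa using this

lemma ayd_HP2 (p : H) (rp : Coalgebra.Repr k p (H × H)) :
    ∑ i ∈ rp.index, Coalgebra.counit (R := k) (rp.left i) •
        HopfAlgebra.antipode (R := k) (rp.right i)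
      = HopfAlgebra.antipode (R := k) p := by
  calc ∑ i ∈ rp.index, Coalgebra.counit (R := k) (rp.left i) •
        HopfAlgebra.antipode (R := k) (rp.right i)
      = ∑ i ∈ rp.index, HopfAlgebra.antipode (R := k)
          (Coalgebra.counit (R := k) (rp.left i) • rp.right i) := by
        simp [map_smul]
    _ = HopfAlgebra.antipode (R := k)
          (∑ i ∈ rp.index, Coalgebra.counit (R := k) (rp.left i) • rp.right i) := by
        rw [map_sum]
    _ = _ := by rw [ayd_sum_counit_smul]

lemma ayd_HP1 (p : H) (rp : Coalgebra.Repr k p (H × H)) (rpl : ∀ i, Coalgebra.Repr k (rp.left i) (H × H)) :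
    ∑ i ∈ rp.index, ∑ l ∈ (rpl i).index,
      (rpl i).left l ⊗ₜ[k] ((rpl i).right l * HopfAlgebra.antipode (R := k) (rp.right i))
      = p ⊗ₜ[k] (1 : H) := by
  have h := ayd_HLa (k := k) p rp rpl
  apply_fun (LinearMap.lTensor H ((LinearMap.mul' k H) ∘ₗ
    (HopfAlgebra.antipode (R := k) (A := H)).lTensor H)) at h
  simp only [map_sum, LinearMap.lTensor_tmul, LinearMap.coe_comp, Function.comp_apply,
    LinearMap.mul'_apply] at h
  rw [h]
  have h2 : ∀ i ∈ rp.index, rp.left i ⊗ₜ[k]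
      ((LinearMap.mul' k H) ((HopfAlgebra.antipode (R := k) (A := H)).lTensor H
        (Coalgebra.comul (R := k) (rp.right i))))
      = Coalgebra.counit (R := k) (rp.right i) • (rp.left i ⊗ₜ[k] (1:H)) := by
    intro i _
    rw [HopfAlgebra.mul_antipode_lTensor_comul_apply, Algebra.algebraMap_eq_smul_one,
      TensorProduct.tmul_smul]
  rw [Finset.sum_congr rfl h2]
  calc ∑ i ∈ rp.index, Coalgebra.counit (R := k) (rp.right i) • (rp.left i ⊗ₜ[k] (1:H))
      = (∑ i ∈ rp.index, Coalgebra.counit (R := k) (rp.right i) • rp.left i) ⊗ₜ[k] (1:H) := by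
        rw [TensorProduct.sum_tmul]
        exact Finset.sum_congr rfl fun i _ => by rw [TensorProduct.smul_tmul']
    _ = p ⊗ₜ[k] (1:H) := by rw [ayd_sum_smul_counit]

variable (r : C →ₗ[k] H →ₗ[k] C) (π : C →ₗc[k] D)

@[simp] lemma actL_tmul (c : C) (h : H) : actL k H C r (c ⊗ₜ[k] h) = r c h := rfl

lemma mul3_tmul (a b c : H) : mul3 k H ((a ⊗ₜ[k] b) ⊗ₜ[k] c) = a * b * c := by
  simp [mul3]

/-- `βmap` on a pure tensor, given a representation of `comul c`. -/
lemma βmap_tmul (c : C) (m : H) (rc : Coalgebra.Repr k c (C × C)) :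
    βmap k H C r (c ⊗ₜ[k] m) = ∑ i ∈ rc.index, rc.left i ⊗ₜ[k] r (rc.right i) m := by
  simp only [βmap, LinearMap.coe_comp, Function.comp_apply, LinearEquiv.coe_coe,
    LinearMap.rTensor_tmul]
  rw [← rc.eq, TensorProduct.sum_tmul, map_sum, map_sum]
  simp [TensorProduct.assoc_tmul]

/-- the two-sided action map on `(H ⊗ H) ⊗ (C □ C)`. -/
def A2map : (H ⊗[k] H) ⊗[k] (cot k C D π) →ₗ[k] C ⊗[k] C :=
  TensorProduct.map (actL k H C r) (actL k H C r) ∘ₗ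
    TensorProduct.map (TensorProduct.comm k H C).toLinearMap
      (TensorProduct.comm k H C).toLinearMap ∘ₗ
    (TensorProduct.tensorTensorTensorComm k H H C C).toLinearMap ∘ₗ
    (cot k C D π).subtype.lTensor (H ⊗[k] H)

lemma A2map_tmul (p q : H) (y : cot k C D π) :
    A2map r π ((p ⊗ₜ[k] q) ⊗ₜ[k] y) =
      TensorProduct.map ((LinearMap.flip r) p) ((LinearMap.flip r) q) (y : C ⊗[k] C) := by
  simp only [A2map, LinearMap.coe_comp, Function.comp_apply, LinearMap.lTensor_tmul,
    Submodule.coe_subtype]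
  induction (y : C ⊗[k] C) using TensorProduct.induction_on with
  | zero => simp
  | tmul e f => simp
  | add z₁ z₂ ih₁ ih₂ => simp only [TensorProduct.tmul_add, map_add, ih₁, ih₂]

/-- `β` corestricted to the cotensor product. -/
def βcod (hβ : ∀ x : C ⊗[k] H, βmap k H C r x ∈ cot k C D π) :
    C ⊗[k] H →ₗ[k] cot k C D π :=
  (βmap k H C r).codRestrict (cot k C D π) hβ

lemma βcod_coe (hβ : ∀ x : C ⊗[k] H, βmap k H C r x ∈ cot k C D π) (x : C ⊗[k] H) :
    (βcod r π hβ x : C ⊗[k] C) = βmap k H C r x := rfl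


variable (g : cot k C D π →ₗ[k] C ⊗[k] H)

lemma κmap_βcod (hβ : ∀ x : C ⊗[k] H, βmap k H C r x ∈ cot k C D π)
    (hgβ : ∀ x : C ⊗[k] H, g ⟨βmap k H C r x, hβ x⟩ = x) (x : C ⊗[k] H) :
    κmap k H C D π g (βcod r π hβ x) =
      (TensorProduct.lid k H) ((Coalgebra.counit (R := k) (A := C)).rTensor H x) := by
  have : βcod r π hβ x = ⟨βmap k H C r x, hβ x⟩ := rfl
  simp only [κmap, LinearMap.coe_comp, Function.comp_apply, LinearEquiv.coe_coe, this, hgβ]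

lemma κmap_βcod_tmul (hβ : ∀ x : C ⊗[k] H, βmap k H C r x ∈ cot k C D π)
    (hgβ : ∀ x : C ⊗[k] H, g ⟨βmap k H C r x, hβ x⟩ = x) (c : C) (m : H) :
    κmap k H C D π g (βcod r π hβ (c ⊗ₜ[k] m)) = Coalgebra.counit (R := k) c • m := by
  rw [κmap_βcod r π g hβ hgβ]
  simp

lemma βcod_g (hβ : ∀ x : C ⊗[k] H, βmap k H C r x ∈ cot k C D π)
    (hβg : ∀ y : cot k C D π, βmap k H C r (g y) = (y : C ⊗[k] C)) (y : cot k C D π) :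
    βcod r π hβ (g y) = y :=
  Subtype.ext (hβg y)

/-- The crux lemma: the value of `κ₀` on the two-sided action of `H ⊗ H` on `C □ C`. -/
lemma ayd_crux
    (hmul : ∀ (c : C) (h h' : H), r (r c h) h' = r c (h * h'))
    (hcomul : ∀ (c : C) (h : H),
      Coalgebra.comul (R := k) (r c h) =
        TensorProduct.map (actL k H C r) (actL k H C r)
          (TensorProduct.tensorTensorTensorComm k C C H H
            (Coalgebra.comul (R := k) c ⊗ₜ[k] Coalgebra.comul (R := k) h)))
    (hcounit : ∀ (c : C) (h : H),
      Coalgebra.counit (R := k) (r c h) =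
        Coalgebra.counit (R := k) c * Coalgebra.counit (R := k) h)
    (hβ : ∀ x : C ⊗[k] H, βmap k H C r x ∈ cot k C D π)
    (hgβ : ∀ x : C ⊗[k] H, g ⟨βmap k H C r x, hβ x⟩ = x)
    (hβg : ∀ y : cot k C D π, βmap k H C r (g y) = (y : C ⊗[k] C))
    (p q : H) (y : cot k C D π) :
    ∃ y' : cot k C D π, (y' : C ⊗[k] C) = A2map r π ((p ⊗ₜ[k] q) ⊗ₜ[k] y) ∧
      κmap k H C D π g y' =
        HopfAlgebra.antipode (R := k) p * κmap k H C D π g y * q := by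
  obtain ⟨x, rfl⟩ : ∃ x, βcod r π hβ x = y := ⟨g y, βcod_g r π g hβ hβg y⟩
  induction x using TensorProduct.induction_on with
  | zero =>
      refine ⟨0, ?_, ?_⟩
      · rw [map_zero (βcod r π hβ), TensorProduct.tmul_zero, map_zero]; rfl
      · simp only [map_zero (βcod r π hβ), map_zero, mul_zero, zero_mul]
  | add x₁ x₂ ih₁ ih₂ =>
      obtain ⟨y₁, hy₁, hy₁'⟩ := ih₁
      obtain ⟨y₂, hy₂, hy₂'⟩ := ih₂
      refine ⟨y₁ + y₂, ?_, ?_⟩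
      · rw [Submodule.coe_add, hy₁, hy₂, map_add (βcod r π hβ),
          TensorProduct.tmul_add, map_add]
      · rw [map_add, hy₁', hy₂', map_add (βcod r π hβ), map_add, mul_add, add_mul]
  | tmul c m =>
      classical
      set S := HopfAlgebra.antipode (R := k) (A := H) with hS
      set rp := Coalgebra.Repr.arbitrary k p with hrp
      set rpl : ∀ i, Coalgebra.Repr k (rp.left i) (H × H) := fun i => Coalgebra.Repr.arbitrary k _
      set rc := Coalgebra.Repr.arbitrary k c with hrc
      set z₀ : C ⊗[k] H := ∑ i ∈ rp.index,
        (r c (rp.left i)) ⊗ₜ[k] (S (rp.right i) * (m * q)) with hz₀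
      refine ⟨βcod r π hβ z₀, ?_, ?_⟩
      · -- β z₀ = A2 ((p⊗q)⊗βcod(c⊗m))
        rw [βcod_coe, A2map_tmul, βcod_coe, βmap_tmul r c m rc]
        conv_rhs => rw [map_sum]
        simp only [TensorProduct.map_tmul]
        -- RHS is now Σ_j (r (rc.left j) p) ⊗ (r (r (rc.right j) m) q)
        have hrhs : ∀ j ∈ rc.index,
            ((LinearMap.flip r) p) (rc.left j) ⊗ₜ[k] ((LinearMap.flip r) q) (r (rc.right j) m)
            = (r (rc.left j) p) ⊗ₜ[k] (r (rc.right j) (m * q)) := by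
          intro j _
          simp only [LinearMap.flip_apply]
          rw [hmul]
        rw [Finset.sum_congr rfl hrhs]
        -- LHS: expand β z₀
        rw [hz₀, map_sum]
        have hterm : ∀ i ∈ rp.index,
            βmap k H C r ((r c (rp.left i)) ⊗ₜ[k] (S (rp.right i) * (m * q)))
            = ∑ j ∈ rc.index, ∑ l ∈ (rpl i).index,
                (r (rc.left j) ((rpl i).left l)) ⊗ₜ[k]
                  (r (rc.right j) (((rpl i).right l * S (rp.right i)) * (m * q))) := by
          intro i _
          simp only [βmap, LinearMap.coe_comp, Function.comp_apply, LinearEquiv.coe_coe,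
            LinearMap.rTensor_tmul]
          rw [hcomul c (rp.left i), ← rc.eq, ← (rpl i).eq]
          simp only [TensorProduct.sum_tmul, TensorProduct.tmul_sum, map_sum]
          rw [Finset.sum_comm]
          refine Finset.sum_congr rfl fun j _ => ?_
          refine Finset.sum_congr rfl fun l _ => ?_
          simp only [TensorProduct.tensorTensorTensorComm_tmul, TensorProduct.map_tmul,
            actL_tmul, TensorProduct.assoc_tmul, LinearMap.lTensor_tmul]
          rw [hmul, mul_assoc]
        rw [Finset.sum_congr rfl hterm]
        -- now sum over i, j, l ; swap to j outermost and use HP1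
        rw [Finset.sum_comm]
        refine Finset.sum_congr rfl fun j _ => ?_
        have := congrArg (TensorProduct.map (r (rc.left j))
          ((r (rc.right j)) ∘ₗ LinearMap.mulRight k (m * q))) (ayd_HP1 (k := k) p rp rpl)
        rw [map_sum] at this
        simp only [map_sum, TensorProduct.map_tmul, LinearMap.coe_comp, Function.comp_apply,
          LinearMap.mulRight_apply, one_mul] at this
        exact this
      · -- κ value
        rw [κmap_βcod_tmul r π g hβ hgβ, hz₀, map_sum, map_sum]
        have hterm : ∀ i ∈ rp.index,
            κmap k H C D π g (βcod r π hβ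
              ((r c (rp.left i)) ⊗ₜ[k] (S (rp.right i) * (m * q))))
            = Coalgebra.counit (R := k) c •
                (Coalgebra.counit (R := k) (rp.left i) • (S (rp.right i) * (m * q))) := by
          intro i _
          rw [κmap_βcod_tmul r π g hβ hgβ, hcounit, mul_smul]
        rw [Finset.sum_congr rfl hterm, ← Finset.smul_sum]
        have : ∑ i ∈ rp.index,
            Coalgebra.counit (R := k) (rp.left i) • (S (rp.right i) * (m * q))
            = S p * (m * q) := by
          rw [← ayd_HP2 (k := k) p rp, Finset.sum_mul]
          exact Finset.sum_congr rfl fun i _ => by rw [smul_mul_assoc]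
        rw [this, mul_smul_comm, ← mul_assoc, smul_mul_assoc]


/-- `σmap : (s⊗(e⊗f))⊗d ↦ e⊗((f⊗d)⊗s)`. -/
def σmap : (C ⊗[k] (C ⊗[k] C)) ⊗[k] D →ₗ[k] C ⊗[k] ((C ⊗[k] D) ⊗[k] C) :=
  (LinearMap.lTensor C ((TensorProduct.assoc k C D C).symm.toLinearMap ∘ₗ
      (LinearMap.lTensor C (TensorProduct.comm k C D).toLinearMap) ∘ₗ
      (TensorProduct.assoc k C C D).toLinearMap)) ∘ₗ
    (TensorProduct.assoc k C (C ⊗[k] C) D).toLinearMap ∘ₗ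
    ((TensorProduct.assoc k C C C).toLinearMap.rTensor D) ∘ₗ
    ((TensorProduct.comm k C (C ⊗[k] C)).toLinearMap.rTensor D)

@[simp] lemma σmap_tmul (s e f : C) (d : D) :
    σmap (k := k) ((s ⊗ₜ[k] (e ⊗ₜ[k] f)) ⊗ₜ[k] d) = e ⊗ₜ[k] ((f ⊗ₜ[k] d) ⊗ₜ[k] s) := by
  simp [σmap]

/-- `Θmap : p1⊗(p2⊗(p3⊗p4)) ↦ p2⊗((p3⊗π(p4))⊗p1)`. -/
def Θmap (π : C →ₗc[k] D) : C ⊗[k] (C ⊗[k] (C ⊗[k] C)) →ₗ[k] C ⊗[k] ((C ⊗[k] D) ⊗[k] C) :=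
  (TensorProduct.assoc k C (C ⊗[k] D) C).toLinearMap ∘ₗ
    ((TensorProduct.assoc k C C D).toLinearMap.rTensor C) ∘ₗ
    ((π.toLinearMap.lTensor (C ⊗[k] C)).rTensor C) ∘ₗ
    (((TensorProduct.assoc k C C C).symm.toLinearMap).rTensor C) ∘ₗ
    (TensorProduct.comm k C (C ⊗[k] (C ⊗[k] C))).toLinearMap

@[simp] lemma Θmap_tmul (π : C →ₗc[k] D) (p1 p2 p3 p4 : C) :
    Θmap π (p1 ⊗ₜ[k] (p2 ⊗ₜ[k] (p3 ⊗ₜ[k] p4))) =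
      p2 ⊗ₜ[k] ((p3 ⊗ₜ[k] π p4) ⊗ₜ[k] p1) := by
  simp [Θmap]

/-- `Θ'map : p1⊗(p2⊗(p3⊗p4)) ↦ p3⊗((p4⊗π(p1))⊗p2)`. -/
def Θ'map (π : C →ₗc[k] D) : C ⊗[k] (C ⊗[k] (C ⊗[k] C)) →ₗ[k] C ⊗[k] ((C ⊗[k] D) ⊗[k] C) :=
  (LinearMap.lTensor C ((TensorProduct.assoc k C D C).symm.toLinearMap ∘ₗ
      (LinearMap.lTensor C (TensorProduct.comm k C D).toLinearMap) ∘ₗ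
      (TensorProduct.assoc k C C D).toLinearMap)) ∘ₗ
    (TensorProduct.assoc k C (C ⊗[k] C) D).toLinearMap ∘ₗ
    ((TensorProduct.assoc k C C C).toLinearMap.rTensor D) ∘ₗ
    ((TensorProduct.comm k C (C ⊗[k] C)).toLinearMap.rTensor D) ∘ₗ
    (TensorProduct.comm k D (C ⊗[k] (C ⊗[k] C))).toLinearMap ∘ₗ
    (π.toLinearMap.rTensor (C ⊗[k] (C ⊗[k] C)))

@[simp] lemma Θ'map_tmul (π : C →ₗc[k] D) (p1 p2 p3 p4 : C) :
    Θ'map π (p1 ⊗ₜ[k] (p2 ⊗ₜ[k] (p3 ⊗ₜ[k] p4))) =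
      p3 ⊗ₜ[k] ((p4 ⊗ₜ[k] π p1) ⊗ₜ[k] p2) := by
  simp [Θ'map]

/-- `coactElem` expanded through representations. -/
lemma coactElem_repr (c : C) (rc : Coalgebra.Repr k c (C × C))
    (rb : ∀ i, Coalgebra.Repr k (rc.right i) (C × C)) :
    coactElem k C c = ∑ i ∈ rc.index, ∑ j ∈ (rb i).index,
      (rb i).left j ⊗ₜ[k] ((rb i).right j ⊗ₜ[k] rc.left i) := by
  simp only [coactElem, Δ3, rot3, LinearMap.coe_comp, Function.comp_apply, LinearEquiv.coe_coe]
  rw [← rc.eq, map_sum, map_sum, map_sum]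
  refine Finset.sum_congr rfl fun i _ => ?_
  rw [LinearMap.lTensor_tmul, ← (rb i).eq, TensorProduct.tmul_sum, map_sum, map_sum]
  simp

/-- the key generalized-coassociativity bridge. -/
lemma ayd_Z1Z2 (c : C) (rc : Coalgebra.Repr k c (C × C))
    (ra : ∀ i, Coalgebra.Repr k (rc.left i) (C × C))
    (rb : ∀ i, Coalgebra.Repr k (rc.right i) (C × C)) :
    ∑ i ∈ rc.index, ∑ m ∈ (ra i).index,
      (ra i).left m ⊗ₜ[k] ((TensorProduct.assoc k C C C)
        ((Coalgebra.comul (R := k) ((ra i).right m)) ⊗ₜ[k] rc.right i))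
    = ∑ i ∈ rc.index, ∑ j ∈ (rb i).index,
      rc.left i ⊗ₜ[k] ((rb i).left j ⊗ₜ[k] Coalgebra.comul (R := k) ((rb i).right j)) := by
  have h := congrArg (LinearMap.lTensor C ((TensorProduct.assoc k C C C).toLinearMap ∘ₗ
    (Coalgebra.comul (R := k) (A := C)).rTensor C)) (ayd_HLa (k := k) c rc ra)
  simp only [map_sum, LinearMap.lTensor_tmul, LinearMap.coe_comp, Function.comp_apply,
    LinearEquiv.coe_coe, LinearMap.rTensor_tmul] at h
  rw [h]
  refine Finset.sum_congr rfl fun i _ => ?_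
  rw [Coalgebra.coassoc_apply, ← (rb i).eq]
  rw [map_sum, TensorProduct.tmul_sum]
  simp

/-- L3: for `c ∈ C^D`, the coaction element lies in the kernel of the tensored equalizer map. -/
lemma ayd_L3 (π : C →ₗc[k] D) (c : C) (hm : memCD k C D π c) :
    (LinearMap.lTensor C (cotL1 k C D π - cotL2 k C D π)) (coactElem k C c) = 0 := by
  classical
  set P := π.toLinearMap with hP
  set rc := Coalgebra.Repr.arbitrary k c with hrc
  set ra : ∀ i, Coalgebra.Repr k (rc.left i) (C × C) := fun i => Coalgebra.Repr.arbitrary k _ with hra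
  set rb : ∀ i, Coalgebra.Repr k (rc.right i) (C × C) := fun i => Coalgebra.Repr.arbitrary k _ with hrb
  -- E : Σ a_i ⊗ P b_i = Σ b_i ⊗ P a_i
  have hE : ∑ i ∈ rc.index, (TensorProduct.map (Δ3 k C) P)
        (rc.left i ⊗ₜ[k] rc.right i)
      = ∑ i ∈ rc.index, (TensorProduct.map (Δ3 k C) P) (rc.right i ⊗ₜ[k] rc.left i) := by
    have h0 := hm
    unfold memCD at h0
    rw [← rc.eq] at h0
    simp only [map_sum, LinearMap.lTensor_tmul, TensorProduct.comm_tmul] at h0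
    have h1 := congrArg ((Δ3 k C).rTensor D) h0
    simp only [map_sum, LinearMap.rTensor_tmul] at h1
    simpa only [TensorProduct.map_tmul] using h1
  have hE4 := congrArg (σmap (k := k) (C := C) (D := D)) hE
  rw [map_sum, map_sum] at hE4
  -- rewrite both sides of hE4 and match with the two halves of the goal
  rw [LinearMap.lTensor_sub]
  refine sub_eq_zero_of_eq (a := (LinearMap.lTensor C (cotL1 k C D π)) (coactElem k C c))
    (b := (LinearMap.lTensor C (cotL2 k C D π)) (coactElem k C c)) ?_
  -- LHS1 = lTensor cotL1 (coactElem c)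
  set ry : ∀ i j, Coalgebra.Repr k ((rb i).right j) (C × C) :=
    fun i j => Coalgebra.Repr.arbitrary k _ with hry
  set rra : ∀ i m, Coalgebra.Repr k ((ra i).right m) (C × C) :=
    fun i m => Coalgebra.Repr.arbitrary k _ with hrra
  -- bridged equality hz : T2 = T1
  have hz := congrArg (Θmap π) (ayd_Z1Z2 (k := k) c rc ra rb)
  simp only [map_sum] at hz
  have hzL : ∀ i ∈ rc.index, ∀ m ∈ (ra i).index,
      (Θmap π) ((ra i).left m ⊗ₜ[k] (TensorProduct.assoc k C C C)
        (Coalgebra.comul (R := k) ((ra i).right m) ⊗ₜ[k] rc.right i))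
      = ∑ l ∈ (rra i m).index,
          (rra i m).left l ⊗ₜ[k] (((rra i m).right l ⊗ₜ[k] P (rc.right i)) ⊗ₜ[k]
            (ra i).left m) := by
    intro i _ m _
    rw [← (rra i m).eq, TensorProduct.sum_tmul, map_sum, TensorProduct.tmul_sum, map_sum]
    simp only [TensorProduct.assoc_tmul, Θmap_tmul]
    rfl
  have hzR : ∀ i ∈ rc.index, ∀ j ∈ (rb i).index,
      (Θmap π) (rc.left i ⊗ₜ[k] ((rb i).left j ⊗ₜ[k]
        Coalgebra.comul (R := k) ((rb i).right j)))
      = ∑ l ∈ (ry i j).index,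
          (rb i).left j ⊗ₜ[k] (((ry i j).left l ⊗ₜ[k] P ((ry i j).right l)) ⊗ₜ[k]
            rc.left i) := by
    intro i _ j _
    rw [← (ry i j).eq, TensorProduct.tmul_sum, TensorProduct.tmul_sum, map_sum]
    simp only [Θmap_tmul]
    rfl
  rw [Finset.sum_congr rfl (fun i hi => Finset.sum_congr rfl (hzL i hi)),
      Finset.sum_congr rfl (fun i hi => Finset.sum_congr rfl (hzR i hi))] at hz
  -- hz : Σ_{i,m,l} e⊗((f⊗Pb)⊗s) = Σ_{i,j,l} x⊗((u⊗Pv)⊗a)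
  have hL1 : (LinearMap.lTensor C (cotL1 k C D π)) (coactElem k C c)
      = ∑ i ∈ rc.index, σmap (k := k) ((TensorProduct.map (Δ3 k C) P)
          (rc.left i ⊗ₜ[k] rc.right i)) := by
    have hA : (LinearMap.lTensor C (cotL1 k C D π)) (coactElem k C c)
        = ∑ i ∈ rc.index, ∑ j ∈ (rb i).index, ∑ l ∈ (ry i j).index,
            (rb i).left j ⊗ₜ[k] (((ry i j).left l ⊗ₜ[k] P ((ry i j).right l)) ⊗ₜ[k]
              rc.left i) := by
      rw [coactElem_repr (k := k) c rc rb]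
      simp only [map_sum, LinearMap.lTensor_tmul]
      refine Finset.sum_congr rfl fun i _ => Finset.sum_congr rfl fun j _ => ?_
      simp only [cotL1, LinearMap.rTensor_tmul, LinearMap.coe_comp, Function.comp_apply]
      rw [← (ry i j).eq, map_sum, TensorProduct.sum_tmul, TensorProduct.tmul_sum]
      simp only [LinearMap.lTensor_tmul]
      rfl
    have hB : ∀ i ∈ rc.index,
        σmap (k := k) ((TensorProduct.map (Δ3 k C) P) (rc.left i ⊗ₜ[k] rc.right i))
        = ∑ m ∈ (ra i).index, ∑ l ∈ (rra i m).index,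
            (rra i m).left l ⊗ₜ[k] (((rra i m).right l ⊗ₜ[k] P (rc.right i)) ⊗ₜ[k]
              (ra i).left m) := by
      intro i _
      rw [TensorProduct.map_tmul]
      have : Δ3 k C (rc.left i) = ∑ m ∈ (ra i).index, ∑ l ∈ (rra i m).index,
          (ra i).left m ⊗ₜ[k] ((rra i m).left l ⊗ₜ[k] (rra i m).right l) := by
        simp only [Δ3, LinearMap.coe_comp, Function.comp_apply]
        rw [← (ra i).eq, map_sum]
        simp only [LinearMap.lTensor_tmul]
        refine Finset.sum_congr rfl fun m _ => ?_
        rw [← (rra i m).eq, TensorProduct.tmul_sum]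
      rw [this, TensorProduct.sum_tmul, map_sum]
      refine Finset.sum_congr rfl fun m _ => ?_
      rw [TensorProduct.sum_tmul, map_sum]
      simp only [σmap_tmul]
    rw [hA, Finset.sum_congr rfl hB]
    exact hz.symm
  -- second bridge, via Θ'map
  have hw := congrArg (LinearMap.lTensor C (LinearMap.lTensor C
    (Coalgebra.comul (R := k) (A := C)))) (ayd_HLa (k := k) c rc ra)
  simp only [map_sum, LinearMap.lTensor_tmul] at hw
  have hw' := congrArg (Θ'map π) hw
  simp only [map_sum] at hw'
  have hwL : ∀ i ∈ rc.index, ∀ m ∈ (ra i).index,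
      (Θ'map π) ((ra i).left m ⊗ₜ[k] ((ra i).right m ⊗ₜ[k]
        Coalgebra.comul (R := k) (rc.right i)))
      = ∑ j ∈ (rb i).index,
          (rb i).left j ⊗ₜ[k] (((rb i).right j ⊗ₜ[k] P ((ra i).left m)) ⊗ₜ[k]
            (ra i).right m) := by
    intro i _ m _
    rw [← (rb i).eq, TensorProduct.tmul_sum, TensorProduct.tmul_sum, map_sum]
    simp only [Θ'map_tmul]
    rfl
  have hwR : ∀ i ∈ rc.index,
      (Θ'map π) (rc.left i ⊗ₜ[k] (LinearMap.lTensor C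
        (Coalgebra.comul (R := k) (A := C)) (Coalgebra.comul (R := k) (rc.right i))))
      = ∑ j ∈ (rb i).index, ∑ l ∈ (ry i j).index,
          (ry i j).left l ⊗ₜ[k] (((ry i j).right l ⊗ₜ[k] P (rc.left i)) ⊗ₜ[k]
            (rb i).left j) := by
    intro i _
    rw [← (rb i).eq, map_sum]
    simp only [LinearMap.lTensor_tmul]
    rw [TensorProduct.tmul_sum, map_sum]
    refine Finset.sum_congr rfl fun j _ => ?_
    rw [← (ry i j).eq, TensorProduct.tmul_sum, TensorProduct.tmul_sum, map_sum]
    simp only [Θ'map_tmul]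
    rfl
  rw [Finset.sum_congr rfl (fun i hi => Finset.sum_congr rfl (hwL i hi)),
      Finset.sum_congr rfl hwR] at hw'
  have hL2 : (LinearMap.lTensor C (cotL2 k C D π)) (coactElem k C c)
      = ∑ i ∈ rc.index, σmap (k := k) ((TensorProduct.map (Δ3 k C) P)
          (rc.right i ⊗ₜ[k] rc.left i)) := by
    have hA : (LinearMap.lTensor C (cotL2 k C D π)) (coactElem k C c)
        = ∑ i ∈ rc.index, ∑ j ∈ (rb i).index, ∑ m ∈ (ra i).index,
            (rb i).left j ⊗ₜ[k] (((rb i).right j ⊗ₜ[k] P ((ra i).left m)) ⊗ₜ[k]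
              (ra i).right m) := by
      rw [coactElem_repr (k := k) c rc rb]
      simp only [map_sum, LinearMap.lTensor_tmul]
      refine Finset.sum_congr rfl fun i _ => Finset.sum_congr rfl fun j _ => ?_
      simp only [cotL2, LinearMap.coe_comp, Function.comp_apply, LinearEquiv.coe_coe,
        LinearMap.lTensor_tmul]
      rw [← (ra i).eq, map_sum, TensorProduct.tmul_sum, map_sum, TensorProduct.tmul_sum]
      simp only [LinearMap.rTensor_tmul, TensorProduct.assoc_symm_tmul]
      rfl
    have hB : ∀ i ∈ rc.index,
        σmap (k := k) ((TensorProduct.map (Δ3 k C) P) (rc.right i ⊗ₜ[k] rc.left i))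
        = ∑ j ∈ (rb i).index, ∑ l ∈ (ry i j).index,
            (ry i j).left l ⊗ₜ[k] (((ry i j).right l ⊗ₜ[k] P (rc.left i)) ⊗ₜ[k]
              (rb i).left j) := by
      intro i _
      rw [TensorProduct.map_tmul]
      have : Δ3 k C (rc.right i) = ∑ j ∈ (rb i).index, ∑ l ∈ (ry i j).index,
          (rb i).left j ⊗ₜ[k] ((ry i j).left l ⊗ₜ[k] (ry i j).right l) := by
        simp only [Δ3, LinearMap.coe_comp, Function.comp_apply]
        rw [← (rb i).eq, map_sum]
        simp only [LinearMap.lTensor_tmul]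
        refine Finset.sum_congr rfl fun j _ => ?_
        rw [← (ry i j).eq, TensorProduct.tmul_sum]
      rw [this, TensorProduct.sum_tmul, map_sum]
      refine Finset.sum_congr rfl fun j _ => ?_
      rw [TensorProduct.sum_tmul, map_sum]
      simp only [σmap_tmul]
    rw [hA, Finset.sum_congr rfl hB]
    calc ∑ i ∈ rc.index, ∑ j ∈ (rb i).index, ∑ m ∈ (ra i).index,
          (rb i).left j ⊗ₜ[k] (((rb i).right j ⊗ₜ[k] P ((ra i).left m)) ⊗ₜ[k]
            (ra i).right m)
        = ∑ i ∈ rc.index, ∑ m ∈ (ra i).index, ∑ j ∈ (rb i).index,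
          (rb i).left j ⊗ₜ[k] (((rb i).right j ⊗ₜ[k] P ((ra i).left m)) ⊗ₜ[k]
            (ra i).right m) := by
          exact Finset.sum_congr rfl fun i _ => Finset.sum_comm
      _ = _ := hw'
  show (LinearMap.lTensor C (cotL1 k C D π)) (coactElem k C c)
      = (LinearMap.lTensor C (cotL2 k C D π)) (coactElem k C c)
  rw [hL1, hL2, hE4]


lemma ayd_exists_w (π : C →ₗc[k] D) (x : C ⊗[k] (C ⊗[k] C))
    (hx : (LinearMap.lTensor C (cotL1 k C D π - cotL2 k C D π)) x = 0) :
    ∃ w : C ⊗[k] (cot k C D π), ((cot k C D π).subtype.lTensor C) w = x := by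
  have hexact : Function.Exact ((cot k C D π).subtype) (cotL1 k C D π - cotL2 k C D π) := by
    intro z
    constructor
    · intro hz
      exact ⟨⟨z, LinearMap.mem_ker.mpr hz⟩, rfl⟩
    · rintro ⟨⟨z', hz'⟩, rfl⟩
      exact LinearMap.mem_ker.mp hz'
  have h2 := Module.Flat.lTensor_exact (M := C) (R := k) hexact
  exact (h2 x).mp hx

/-- expansion of `Δ3H`. -/
lemma Δ3H_repr (h : H) (rh : Coalgebra.Repr k h (H × H)) (rhy : ∀ s, Coalgebra.Repr k (rh.right s) (H × H)) :
    Δ3H k H h = ∑ s ∈ rh.index, ∑ t ∈ (rhy s).index,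
      rh.left s ⊗ₜ[k] ((rhy s).left t ⊗ₜ[k] (rhy s).right t) := by
  simp only [Δ3H, LinearMap.coe_comp, Function.comp_apply]
  rw [← rh.eq, map_sum]
  simp only [LinearMap.lTensor_tmul]
  refine Finset.sum_congr rfl fun s _ => ?_
  rw [← (rhy s).eq, TensorProduct.tmul_sum]

/-- evaluation of `aydLHS` on pure tensors. -/
lemma aydLHS_tmul (g : cot k C D π →ₗ[k] C ⊗[k] H) (x u v : H) (α : C) (ω : cot k C D π) :
    aydLHS k H C D r π g ((x ⊗ₜ[k] (u ⊗ₜ[k] v)) ⊗ₜ[k] (α ⊗ₜ[k] ω)) =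
      (HopfAlgebra.antipode (R := k) v * κmap k H C D π g ω * x) ⊗ₜ[k] (r α u) := by
  simp only [aydLHS, LinearMap.coe_comp, Function.comp_apply, LinearEquiv.coe_coe,
    TensorProduct.map_tmul, LinearMap.lTensor_tmul, LinearMap.rTensor_tmul,
    TensorProduct.assoc_symm_tmul, TensorProduct.tensorTensorTensorComm_tmul,
    TensorProduct.comm_tmul, TensorProduct.assoc_tmul, mul3_tmul, actL_tmul]

/-- transport of `coactElem` under the action. -/
lemma coactElem_act
    (hcomul : ∀ (c : C) (h : H),
      Coalgebra.comul (R := k) (r c h) =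
        TensorProduct.map (actL k H C r) (actL k H C r)
          (TensorProduct.tensorTensorTensorComm k C C H H
            (Coalgebra.comul (R := k) c ⊗ₜ[k] Coalgebra.comul (R := k) h)))
    (c : C) (h : H)
    (rh : Coalgebra.Repr k h (H × H)) (rhy : ∀ s, Coalgebra.Repr k (rh.right s) (H × H)) :
    coactElem k C (r c h) = ∑ s ∈ rh.index, ∑ t ∈ (rhy s).index,
      (TensorProduct.map ((LinearMap.flip r) ((rhy s).left t))
        (TensorProduct.map ((LinearMap.flip r) ((rhy s).right t))
          ((LinearMap.flip r) (rh.left s))))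
        (coactElem k C c) := by
  classical
  set rc := Coalgebra.Repr.arbitrary k c with hrc
  set rb : ∀ i, Coalgebra.Repr k (rc.right i) (C × C) := fun i => Coalgebra.Repr.arbitrary k _ with hrb
  -- RHS explicit
  have hR : ∀ s ∈ rh.index, ∀ t ∈ (rhy s).index,
      (TensorProduct.map ((LinearMap.flip r) ((rhy s).left t))
        (TensorProduct.map ((LinearMap.flip r) ((rhy s).right t))
          ((LinearMap.flip r) (rh.left s)))) (coactElem k C c)
      = ∑ i ∈ rc.index, ∑ j ∈ (rb i).index,
          (r ((rb i).left j) ((rhy s).left t)) ⊗ₜ[k]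
            ((r ((rb i).right j) ((rhy s).right t)) ⊗ₜ[k] (r (rc.left i) (rh.left s))) := by
    intro s _ t _
    rw [coactElem_repr (k := k) c rc rb]
    simp only [map_sum, TensorProduct.map_tmul, LinearMap.flip_apply]
  rw [Finset.sum_congr rfl (fun s hs => Finset.sum_congr rfl (hR s hs))]
  -- LHS explicit
  have hL : coactElem k C (r c h) = ∑ i ∈ rc.index, ∑ s ∈ rh.index,
      ∑ j ∈ (rb i).index, ∑ t ∈ (rhy s).index,
        (r ((rb i).left j) ((rhy s).left t)) ⊗ₜ[k]
          ((r ((rb i).right j) ((rhy s).right t)) ⊗ₜ[k] (r (rc.left i) (rh.left s))) := by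
    simp only [coactElem, Δ3, rot3, LinearMap.coe_comp, Function.comp_apply,
      LinearEquiv.coe_coe]
    rw [hcomul c h, ← rc.eq, ← rh.eq]
    simp only [TensorProduct.sum_tmul, TensorProduct.tmul_sum, map_sum,
      TensorProduct.tensorTensorTensorComm_tmul, TensorProduct.map_tmul, actL_tmul]
    rw [Finset.sum_comm]
    refine Finset.sum_congr rfl fun i _ => Finset.sum_congr rfl fun s _ => ?_
    simp only [LinearMap.lTensor_tmul]
    rw [hcomul (rc.right i) (rh.right s), ← (rb i).eq, ← (rhy s).eq]
    simp only [TensorProduct.sum_tmul, TensorProduct.tmul_sum, map_sum,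
      TensorProduct.tensorTensorTensorComm_tmul, TensorProduct.map_tmul, actL_tmul,
      LinearMap.lTensor_tmul, TensorProduct.comm_tmul, TensorProduct.assoc_tmul]
    rw [Finset.sum_comm]
  rw [hL]
  rw [Finset.sum_comm]
  refine Finset.sum_congr rfl fun s _ => ?_
  rw [Finset.sum_comm]
  refine Finset.sum_congr rfl fun i _ => Finset.sum_comm

end AYDAux




/-- Theorem 3.8, anti-Yetter-Drinfeld condition: for `c ∈ C^D` and `h ∈ H`, `Σ S(h⁽³⁾)·κ₀(c⁽³⁾ ⊗ c⁽¹⁾)·h⁽¹⁾ ⊗ (c⁽²⁾ ◁ h⁽²⁾) = Σ κ₀((c ◁ h)⁽³⁾ ⊗ (c ◁ h)⁽¹⁾) ⊗ (c ◁ h)⁽²⁾` in `H ⊗ C`, the coaction elements being witnessed by `w` and `w'`. -/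
theorem thm38_ayd
    (r : C →ₗ[k] H →ₗ[k] C) (π : C →ₗc[k] D)
    (hone : ∀ c : C, r c 1 = c)
    (hmul : ∀ (c : C) (h h' : H), r (r c h) h' = r c (h * h'))
    (hcomul : ∀ (c : C) (h : H),
      Coalgebra.comul (R := k) (r c h) =
        TensorProduct.map (actL k H C r) (actL k H C r)
          (TensorProduct.tensorTensorTensorComm k C C H H
            (Coalgebra.comul (R := k) c ⊗ₜ[k] Coalgebra.comul (R := k) h)))
    (hcounit : ∀ (c : C) (h : H),
      Coalgebra.counit (R := k) (r c h) =
        Coalgebra.counit (R := k) c * Coalgebra.counit (R := k) h)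
    (hπsurj : Function.Surjective π)
    (hker : LinearMap.ker π.toLinearMap = coidealI k H C r)
    (hβ : ∀ x : C ⊗[k] H, βmap k H C r x ∈ cot k C D π)
    (g : cot k C D π →ₗ[k] C ⊗[k] H)
    (hgβ : ∀ x : C ⊗[k] H, g ⟨βmap k H C r x, hβ x⟩ = x)
    (hβg : ∀ y : cot k C D π, βmap k H C r (g y) = (y : C ⊗[k] C))
    :
    ∀ (c : C) (h : H), memCD k C D π c →
      ∃ w w' : C ⊗[k] (cot k C D π),
        ((cot k C D π).subtype.lTensor C) w = coactElem k C c ∧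
        ((cot k C D π).subtype.lTensor C) w' = coactElem k C (r c h) ∧
        aydLHS k H C D r π g (Δ3H k H h ⊗ₜ[k] w) =
          (TensorProduct.comm k C H) (((κmap k H C D π g).lTensor C) w') := by
  intro c h hm
  classical
  obtain ⟨w, hw⟩ := ayd_exists_w π (coactElem k C c) (ayd_L3 π c hm)
  obtain ⟨Sw, hSw⟩ := TensorProduct.exists_finset (R := k) w
  set rh := Coalgebra.Repr.arbitrary k h with hrh
  set rhy : ∀ s, Coalgebra.Repr k (rh.right s) (H × H) := fun s => Coalgebra.Repr.arbitrary k _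
    with hrhy
  choose Y hY1 hY2 using fun (p q : H) (y : cot k C D π) =>
    ayd_crux r π g hmul hcomul hcounit hβ hgβ hβg p q y
  set w' : C ⊗[k] (cot k C D π) := ∑ pr ∈ Sw, ∑ s ∈ rh.index, ∑ t ∈ (rhy s).index,
    (r pr.1 ((rhy s).left t)) ⊗ₜ[k] Y ((rhy s).right t) (rh.left s) pr.2 with hw'def
  refine ⟨w, w', hw, ?_, ?_⟩
  · -- Goal 2 : coaction element of r c h
    rw [coactElem_act r hcomul c h rh rhy, ← hw, hSw, hw'def]
    simp only [map_sum, LinearMap.lTensor_tmul, TensorProduct.map_tmul,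
      Submodule.coe_subtype, LinearMap.flip_apply]
    have hterm : ∀ (pr : C × cot k C D π), ∀ s ∈ rh.index, ∀ t ∈ (rhy s).index,
        (r pr.1 ((rhy s).left t)) ⊗ₜ[k]
            ((Y ((rhy s).right t) (rh.left s) pr.2 : C ⊗[k] C))
        = (r pr.1 ((rhy s).left t)) ⊗ₜ[k]
            (TensorProduct.map ((LinearMap.flip r) ((rhy s).right t))
              ((LinearMap.flip r) (rh.left s)) (pr.2 : C ⊗[k] C)) := by
      intro pr s _ t _
      rw [hY1, A2map_tmul]
    rw [Finset.sum_congr rfl (fun pr _ => Finset.sum_congr rfl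
      (fun s hs => Finset.sum_congr rfl (hterm pr s hs)))]
    rw [Finset.sum_comm]
    refine Finset.sum_congr rfl fun s _ => ?_
    rw [Finset.sum_comm]
  · -- Goal 3 : the AYD identity
    rw [Δ3H_repr h rh rhy, hSw, hw'def]
    simp only [TensorProduct.sum_tmul, TensorProduct.tmul_sum, map_sum,
      LinearMap.lTensor_tmul, TensorProduct.comm_tmul]
    have hterm : ∀ s ∈ rh.index, ∀ t ∈ (rhy s).index, ∀ pr ∈ Sw,
        aydLHS k H C D r π g ((rh.left s ⊗ₜ[k] ((rhy s).left t ⊗ₜ[k] (rhy s).right t))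
          ⊗ₜ[k] (pr.1 ⊗ₜ[k] pr.2))
        = κmap k H C D π g (Y ((rhy s).right t) (rh.left s) pr.2) ⊗ₜ[k]
            (r pr.1 ((rhy s).left t)) := by
      intro s _ t _ pr _
      rw [aydLHS_tmul, hY2]
    exact Finset.sum_congr rfl fun pr hpr => Finset.sum_congr rfl fun s hs =>
      Finset.sum_congr rfl fun t ht => hterm s hs t ht pr hpr

end
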